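/- x ≈ y if and only if for every b, x ⇓ b ↔ y ⇓ b. -/
import Mathlib


inductive Converges {A : Type*} : Computation A → A → Prop
  | ret (a : A) : Converges (Computation.pure a) a
  | step {x : Computation A} {a : A} : Converges x a → Converges x.think a

def Diverge {A : Type*} (x : Computation A) : Prop :=
  ∃ P : Computation A → Prop, P x ∧ ∀ y, P y → ∃ y', y = Computation.think y' ∧ P y'

def WBisim {A : Type*} (x y : Computation A) : Prop :=
  ∃ R : Computation A → Computation A → Prop, R x y ∧ ∀ u v, R u v →
    (∃ a, Converges u a ∧ Converges v a) ∨
    (∃ u' v', u = Computation.think u' ∧ v = Computation.think v' ∧ R u' v')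

def ConvOrder {A : Type*} (x y : Computation A) : Prop :=
  ∃ R : Computation A → Computation A → Prop, R x y ∧ ∀ u v, R u v →
    (∃ a, Converges u a ∧ Converges v a) ∨
    (∃ u' v', u = Computation.think u' ∧ v = Computation.think v' ∧ R u' v') ∨
    (∃ u', u = Computation.think u' ∧ R u' v)

def stepInf (A : Type*) : Computation A := Computation.empty A

inductive DFinite {A : Type*} : Computation A → Prop
  | ret (a : A) : DFinite (Computation.pure a)
  | step {x : Computation A} : DFinite x → DFinite x.think

def Finitary {A B : Type*} (F : (A → Computation B) → (A → Computation B)) : Prop :=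
  ∀ f a b, Converges (F f a) b →
    ∃ l : List (A × B), (∀ p ∈ l, Converges (f p.1) p.2) ∧
      ∀ g : A → Computation B, (∀ p ∈ l, Converges (g p.1) p.2) → Converges (F g a) b


lemma think_inj' {A : Type*} {u v : Computation A} (h : Computation.think u = Computation.think v) : u = v := by
  have := congrArg Computation.destruct h
  simpa using this

lemma pure_ne_think {A : Type*} {a : A} {u : Computation A} (h : Computation.pure a = Computation.think u) : False := by
  have := congrArg Computation.destruct h
  simp at this

lemma conv_pure {A : Type*} {a b : A} (h : Converges (Computation.pure a) b) : a = b := by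
  generalize he : Computation.pure a = t at h
  induction h with
  | ret c => simpa using congrArg Computation.destruct he
  | step _ _ => exact absurd he pure_ne_think

lemma conv_think {A : Type*} {u : Computation A} {b : A} (h : Converges u.think b) : Converges u b := by
  generalize he : u.think = t at h
  induction h with
  | ret c => exact absurd he.symm pure_ne_think
  | step h _ => rwa [think_inj' he]

lemma conv_det {A : Type*} {u : Computation A} {a b : A} (ha : Converges u a) (hb : Converges u b) : a = b := by
  induction ha with
  | ret c => exact conv_pure hb
  | step _ ih => exact ih (conv_think hb)

theorem stmt16 {A : Type*} (x y : Computation A) :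
    WBisim x y ↔ ∀ b : A, Converges x b ↔ Converges y b := by
  constructor
  · rintro ⟨R, hxy, hR⟩ b
    have key : ∀ u v, R u v → ∀ b, (Converges u b → Converges v b) ∧ (Converges v b → Converges u b) := by
      intro u v huv b
      constructor
      · intro hu
        induction hu generalizing v with
        | ret a =>
          rcases hR _ _ huv with ⟨c, hc, hc'⟩ | ⟨u', v', he, _, _⟩
          · rwa [conv_pure hc]
          · exact absurd he pure_ne_think
        | step h ih =>
          rcases hR _ _ huv with ⟨c, hc, hc'⟩ | ⟨u', v', he, hv, hR'⟩
          · rwa [conv_det (Converges.step h) hc]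
          · obtain rfl := think_inj' he
            rw [hv]; exact Converges.step (ih _ hR')
      · intro hv
        induction hv generalizing u with
        | ret a =>
          rcases hR _ _ huv with ⟨c, hc, hc'⟩ | ⟨u', v', _, he, _⟩
          · rwa [conv_pure hc']
          · exact absurd he pure_ne_think
        | step h ih =>
          rcases hR _ _ huv with ⟨c, hc, hc'⟩ | ⟨u', v', hu, he, hR'⟩
          · rwa [conv_det (Converges.step h) hc']
          · obtain rfl := think_inj' he
            rw [hu]; exact Converges.step (ih _ hR')
    exact ⟨(key _ _ hxy b).1, (key _ _ hxy b).2⟩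
  · intro h
    refine ⟨fun u v => ∀ b, Converges u b ↔ Converges v b, h, fun u v huv => ?_⟩
    by_cases hc : ∃ a, Converges u a
    · obtain ⟨a, ha⟩ := hc
      exact Or.inl ⟨a, ha, (huv a).1 ha⟩
    · right
      rcases hu : Computation.destruct u with a | u'
      · exact absurd ⟨a, Computation.destruct_eq_pure hu ▸ Converges.ret a⟩ hc
      rcases hv : Computation.destruct v with b | v'
      · exact absurd ⟨b, (huv b).2 (Computation.destruct_eq_pure hv ▸ Converges.ret b)⟩ hc
      refine ⟨u', v', Computation.destruct_eq_think hu, Computation.destruct_eq_think hv, fun b => ?_⟩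
      have h1 := Computation.destruct_eq_think hu
      have h2 := Computation.destruct_eq_think hv
      constructor
      · intro hb
        exact conv_think (h2 ▸ (huv b).1 (h1 ▸ Converges.step hb))
      · intro hb
        exact conv_think (h1 ▸ (huv b).2 (h2 ▸ Converges.step hb))
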